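/- arXiv:1006.3210 — 2 statements merged into one kernel-verified Lean document; each statement's English description precedes it below -/
import Mathlib

section
/- For every natural number n, the operator identity (X + sD)^n = Σ_{k=0}^{n} C(n,k) · H_{n-k}(X,s) · s^k D^k holds as an identity of linear operators on the polynomial ring, where H_{n-k}(X,s) denotes the operator of multiplication by the polynomial H_{n-k}(x,s) and C(n,k) is the ordinary binomial coefficient. -/
/-!
`X + sD` moves past multiplication by a polynomial `p` by the Leibniz rule:
`(X + sD) ∘ p = (x p + s p') + p ∘ sD`. The Hermite-type polynomials satisfy
`H (m + 1) = x H m + s H m'`, so on the operators `T i j = H i ∘ (sD)^j` left multiplication by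
`X + sD` acts as the sum of the two commuting shifts `i ↦ i + 1` and `j ↦ j + 1`. Iterating
gives the binomial expansion of `(X + sD)^n = (X + sD)^n ∘ T 0 0`.
-/

noncomputable section

/-- The field `ℚ(s)` of rational functions in an indeterminate `s`. -/
abbrev F : Type := RatFunc ℚ

/-- The indeterminate `s`. -/
def s : F := RatFunc.X

/-- The operator `X` of multiplication by `x` on `F[x]`. -/
def Xop : Module.End F (Polynomial F) := LinearMap.mulLeft F Polynomial.X

/-- The operator `D` of formal differentiation `d/dx` on `F[x]`. -/
def D : Module.End F (Polynomial F) := Polynomial.derivative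

/-- The Hermite-type polynomials: `H 0 = 1`, `H 1 = x`,
`H n = x·H (n-1) + (n-1)·s·H (n-2)` for `n ≥ 2`. -/
def H : ℕ → Polynomial F
  | 0 => 1
  | 1 => Polynomial.X
  | n + 2 => Polynomial.X * H (n + 1) + Polynomial.C (((n : F) + 1) * s) * H n

open Finset Polynomial

theorem pow_mul_eq_sum_choose_nsmul {R : Type*} [Semiring R] (a : R) (T : ℕ → ℕ → R)
    (hT : ∀ i j, a * T i j = T (i + 1) j + T i (j + 1)) (n i j : ℕ) :
    a ^ n * T i j = ∑ k ∈ range (n + 1), n.choose k • T (i + (n - k)) (j + k) := by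
  induction n generalizing i j with
  | zero => simp
  | succ n ih =>
    rw [sum_choose_succ_nsmul (fun k m => T (i + m) (j + k)) n, pow_succ, mul_assoc, hT, mul_add, ih, ih]
    congr 1
    · refine sum_congr rfl fun k hk => ?_
      have hk : k ≤ n := Nat.lt_succ_iff.mp (mem_range.mp hk)
      rw [show i + 1 + (n - k) = i + (n + 1 - k) by omega]
    · exact sum_congr rfl fun k _ => by rw [show j + 1 + k = j + (k + 1) by omega]

theorem mulLeft_X_add_smul_derivative_mul_mulLeft {R : Type*} [CommSemiring R] (c : R)
    (p : R[X]) :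
    (LinearMap.mulLeft R X + c • derivative) * LinearMap.mulLeft R p =
      LinearMap.mulLeft R (X * p + c • derivative p) + LinearMap.mulLeft R p * (c • derivative) := by
  refine LinearMap.ext fun q => ?_
  simp only [Module.End.mul_apply, LinearMap.add_apply, LinearMap.smul_apply,
    LinearMap.mulLeft_apply, derivative_mul, smul_eq_C_mul]
  ring

theorem derivative_H_succ : ∀ m : ℕ, derivative (H (m + 1)) = (m + 1 : F[X]) * H m
  | 0 => by simp [H]
  | 1 => by
    simp only [H, derivative_add, derivative_mul, derivative_X, derivative_C, derivative_one,
      Nat.cast_one]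
    ring
  | m + 2 => by
    rw [H, derivative_add, derivative_mul, derivative_mul, derivative_X, derivative_C,
      derivative_H_succ (m + 1), derivative_H_succ m, H]
    simp only [C_mul, C_add, C_1, map_natCast]
    push_cast
    ring

theorem H_succ (m : ℕ) : H (m + 1) = X * H m + s • derivative (H m) := by
  cases m with
  | zero => simp [H]
  | succ m =>
    rw [H, derivative_H_succ, smul_eq_C_mul, C_mul, C_add, C_1, map_natCast]
    ring

theorem burchnall (n : ℕ) :
    (Xop + s • D) ^ n =
      ∑ k ∈ Finset.range (n + 1),
        (n.choose k : F) • (LinearMap.mulLeft F (H (n - k)) * (s ^ k • D ^ k)) := by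
  let T : ℕ → ℕ → Module.End F F[X] := fun i j => LinearMap.mulLeft F (H i) * (s • D) ^ j
  have hT : ∀ i j, (Xop + s • D) * T i j = T (i + 1) j + T i (j + 1) := by
    intro i j
    rw [← mul_assoc, Xop, D, mulLeft_X_add_smul_derivative_mul_mulLeft, ← H_succ, add_mul,
      mul_assoc, ← pow_succ']
    rfl
  have expansion := pow_mul_eq_sum_choose_nsmul _ T hT n 0 0
  have hT00 : T 0 0 = 1 := by simp only [T, H, LinearMap.mulLeft_one, pow_zero, mul_one]; rfl
  rw [hT00, mul_one] at expansion
  rw [expansion]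
  refine sum_congr rfl fun k _ => ?_
  simp only [T, zero_add, _root_.smul_pow, Nat.cast_smul_eq_nsmul]

end
end

section
/- For all natural numbers n, m, ℓ with ℓ ≤ m and ℓ ≤ n - m, the identity Σ_{i=0}^{ℓ} C(n,i) · (-1)^{ℓ-i} · q^{C(ℓ-i,2)} · ([n-2i]_q/[n-i-ℓ]_q) · [n-i-ℓ choose m-ℓ]_q · [n-m-i choose ℓ-i]_q = [n-2ℓ choose m-ℓ]_q · Σ_{i=0}^{ℓ} C(n,i) · (-1)^{ℓ-i} · q^{C(ℓ-i,2)} · λ_q(n-2i, ℓ-i) holds in the field ℚ(q), where C(n,i) is the ordinary binomial coefficient, C(ℓ-i,2) = (ℓ-i)(ℓ-i-1)/2, and in the left-hand sum the term with i = ℓ and n = 2ℓ (where the ratio reads [0]_q/[0]_q) is interpreted as C(n,ℓ) · [n-2ℓ choose m-ℓ]_q, consistent with λ_q(0,0) = 1. -/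
/- STATEMENT 19: the q-Weyl binomial identity (equivalence of (4.13) and (4.16)):
for ℓ ≤ m and ℓ ≤ n - m,
Σ_{i=0}^{ℓ} C(n,i)(-1)^{ℓ-i} q^{C(ℓ-i,2)} ([n-2i]_q/[n-i-ℓ]_q) [n-i-ℓ choose m-ℓ]_q [n-m-i choose ℓ-i]_q
  = [n-2ℓ choose m-ℓ]_q · Σ_{i=0}^{ℓ} C(n,i)(-1)^{ℓ-i} q^{C(ℓ-i,2)} λ_q(n-2i, ℓ-i),
where the term with n-2i = 0 (i.e. i = ℓ, n = 2ℓ) on the left is interpreted with the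
ratio [0]_q/[0]_q replaced by 1, consistently with λ_q(0,0) = 1. -/

noncomputable section

/-- The indeterminate `q`. -/
def q : F := RatFunc.X

/-- The q-integer `[n]_q = 1 + q + ⋯ + q^{n-1}`. -/
def qInt (n : ℕ) : F := ∑ i ∈ Finset.range n, q ^ i

/-- The q-factorial `[n]_q! = ∏_{k=1}^n [k]_q`. -/
def qFact (n : ℕ) : F := ∏ k ∈ Finset.range n, qInt (k + 1)

/-- The q-binomial coefficient `[n choose k]_q = [n]_q!/([k]_q! [n-k]_q!)`. -/
def qBinom (n k : ℕ) : F := qFact n / (qFact k * qFact (n - k))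

/-- The q-Lucas coefficient `λ_q(n,k) = ([n]_q/[n-k]_q)·[n-k choose k]_q` for `n ≥ 1`,
with `λ_q(0,0) = 1`. -/
def lam (n k : ℕ) : F :=
  if n = 0 ∧ k = 0 then 1 else qInt n / qInt (n - k) * qBinom (n - k) k

/-!
Proof: the identity holds summand by summand. Writing `a = n - i - ℓ`, `b = m - ℓ`, `c = ℓ - i`,
the `i`-th summands agree because of the symmetry
`[a choose b]_q [a - b choose c]_q = [a choose c]_q [a - c choose b]_q`
of the q-trinomial coefficient `[a]_q! / ([b]_q! [c]_q! [a - b - c]_q!)`.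
-/

lemma qInt_ne_zero {n : ℕ} (hn : n ≠ 0) : qInt n ≠ 0 := by
  have hpoly : qInt n = algebraMap (Polynomial ℚ) F (∑ i ∈ Finset.range n, Polynomial.X ^ i) := by
    simp [qInt, q, RatFunc.algebraMap_X]
  rw [hpoly]
  refine RatFunc.algebraMap_ne_zero fun h => hn ?_
  -- evaluating at `q = 1` gives `n`
  simpa [Polynomial.eval_finsetSum] using congrArg (Polynomial.eval 1) h

lemma qFact_ne_zero (n : ℕ) : qFact n ≠ 0 :=
  Finset.prod_ne_zero_iff.mpr fun k _ => qInt_ne_zero k.succ_ne_zero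

lemma qBinom_zero_right (n : ℕ) : qBinom n 0 = 1 := by
  rw [qBinom, Nat.sub_zero, show qFact 0 = 1 from Finset.prod_range_zero _, one_mul,
    div_self (qFact_ne_zero n)]

lemma lam_of_ne_zero {n : ℕ} (k : ℕ) (hn : n ≠ 0) :
    lam n k = qInt n / qInt (n - k) * qBinom (n - k) k :=
  if_neg fun h => hn h.1

lemma qBinom_mul_qBinom_sub (a b c : ℕ) :
    qBinom a b * qBinom (a - b) c = qFact a / (qFact b * qFact c * qFact (a - b - c)) := by
  unfold qBinom
  field_simp [qFact_ne_zero]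

lemma qBinom_mul_qBinom_sub_comm (a b c : ℕ) :
    qBinom a b * qBinom (a - b) c = qBinom a c * qBinom (a - c) b := by
  rw [qBinom_mul_qBinom_sub, qBinom_mul_qBinom_sub, Nat.sub_right_comm, mul_comm (qFact b)]

lemma qWeyl_summand_eq {n m ℓ i : ℕ} (h₁ : ℓ ≤ m) (h₂ : ℓ ≤ n - m) (hi : i ≤ ℓ) :
    (if n - 2 * i = 0 then 1 else qInt (n - 2 * i) / qInt (n - i - ℓ)) *
        qBinom (n - i - ℓ) (m - ℓ) * qBinom (n - m - i) (ℓ - i) =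
      qBinom (n - 2 * ℓ) (m - ℓ) * lam (n - 2 * i) (ℓ - i) := by
  by_cases hz : n - 2 * i = 0
  · obtain rfl : i = ℓ := by omega
    rw [if_pos hz, show n - i - i = n - 2 * i by omega, Nat.sub_self, qBinom_zero_right,
      lam, if_pos ⟨hz, rfl⟩]
    ring
  · have hsymm := qBinom_mul_qBinom_sub_comm (n - i - ℓ) (m - ℓ) (ℓ - i)
    rw [show n - i - ℓ - (m - ℓ) = n - m - i by omega,
      show n - i - ℓ - (ℓ - i) = n - 2 * ℓ by omega] at hsymm
    rw [if_neg hz, lam_of_ne_zero _ hz, show n - 2 * i - (ℓ - i) = n - i - ℓ by omega,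
      mul_assoc, hsymm]
    ring

theorem qWeyl_identity (n m ℓ : ℕ) (h₁ : ℓ ≤ m) (h₂ : ℓ ≤ n - m) :
    ∑ i ∈ Finset.range (ℓ + 1),
        (n.choose i : F) * (-1) ^ (ℓ - i) * q ^ (ℓ - i).choose 2 *
          (if n - 2 * i = 0 then 1 else qInt (n - 2 * i) / qInt (n - i - ℓ)) *
          qBinom (n - i - ℓ) (m - ℓ) * qBinom (n - m - i) (ℓ - i) =
      qBinom (n - 2 * ℓ) (m - ℓ) *
        ∑ i ∈ Finset.range (ℓ + 1),
          (n.choose i : F) * (-1) ^ (ℓ - i) * q ^ (ℓ - i).choose 2 *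
            lam (n - 2 * i) (ℓ - i) := by
  rw [Finset.mul_sum]
  refine Finset.sum_congr rfl fun i hi => ?_
  have hsummand := qWeyl_summand_eq h₁ h₂ (Nat.lt_succ_iff.mp (Finset.mem_range.mp hi))
  linear_combination ((n.choose i : F) * (-1) ^ (ℓ - i) * q ^ (ℓ - i).choose 2) * hsummand
end
end
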